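/- arXiv:1610.02523 — 2 statements merged into one kernel-verified Lean document; each statement's English description precedes it below -/
import Mathlib

section
/- If a topological space X is a k_R-space (Tychonoff, and real-valued functions continuous on all compact sets are continuous), then X contains no strict Cld^ω-fan; that is, there is no countable family {F_n}_{n∈ω} of closed subsets of X which is compact-finite, not locally finite, and such that each F_n has a functional neighborhood U_n with {U_n}_{n∈ω} compact-finite. -/
/-- A k_R-space contains no strict Cld^ω-fan. -/
theorem stmt12 {X : Type*} [TopologicalSpace X] [CompletelyRegularSpace X] [T1Space X]
    (hkR : ∀ f : X → ℝ, (∀ K : Set X, IsCompact K → Continuous (fun x : K => f x)) →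
      Continuous f) :
    ¬ ∃ F U : ℕ → Set X,
      (∀ n, IsClosed (F n)) ∧
      (∀ K : Set X, IsCompact K → {n | (K ∩ F n).Nonempty}.Finite) ∧
      ¬ (∀ x : X, ∃ V ∈ nhds x, {n | (V ∩ F n).Nonempty}.Finite) ∧
      (∀ n, ∃ g : X → ℝ, Continuous g ∧ (∀ y, g y ∈ Set.Icc (0:ℝ) 1) ∧
        (∀ x ∈ F n, g x = 1) ∧ ∀ y ∉ U n, g y = 0) ∧
      (∀ K : Set X, IsCompact K → {n | (K ∩ U n).Nonempty}.Finite) := by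
  rintro ⟨F, U, hFcl, hFcf, hFnlf, hg, hUcf⟩
  choose g hgc hg01 hgF hgU using hg
  set f : X → ℝ := fun x => ∑' n : ℕ, (n : ℝ) * g n x with hf
  have hsupp : ∀ x : X, (Function.support fun n : ℕ => (n : ℝ) * g n x).Finite := by
    intro x
    apply Set.Finite.subset (hUcf {x} isCompact_singleton)
    intro n hn
    simp only [Function.mem_support] at hn
    refine ⟨x, Set.mem_singleton x, ?_⟩
    by_contra hx
    exact hn (by rw [hgU n x hx]; ring)
  have hsum : ∀ x : X, Summable (fun n : ℕ => (n : ℝ) * g n x) := fun x =>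
    summable_of_finite_support (hsupp x)
  have hnonneg : ∀ (x : X) (n : ℕ), 0 ≤ (n : ℝ) * g n x := fun x n =>
    mul_nonneg (Nat.cast_nonneg n) (hg01 n x).1
  have hfc : Continuous f := by
    apply hkR
    intro K hK
    have hfin := hUcf K hK
    have heq : (fun y : K => f y) = fun y : K => ∑ n ∈ hfin.toFinset, (n : ℝ) * g n y := by
      funext y
      apply tsum_eq_sum
      intro n hn
      have hne : ¬(K ∩ U n).Nonempty := fun h => hn (hfin.mem_toFinset.2 h)
      have hy : (y : X) ∉ U n := fun hy => hne ⟨y, y.2, hy⟩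
      rw [hgU n y hy]; ring
    rw [heq]
    exact continuous_finset_sum _ fun n _ =>
      continuous_const.mul ((hgc n).comp continuous_subtype_val)
  apply hFnlf
  intro x
  refine ⟨f ⁻¹' Set.Iio (f x + 1),
    (hfc.isOpen_preimage _ isOpen_Iio).mem_nhds (by simp), ?_⟩
  apply Set.Finite.subset (Set.finite_Iio ⌈f x + 1⌉₊)
  rintro n ⟨y, hyV, hyF⟩
  have h1 : (n : ℝ) ≤ f y := by
    have h := Summable.le_tsum (hsum y) n (fun m _ => hnonneg y m)
    rwa [hgF n y hyF, mul_one] at h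
  exact Nat.lt_ceil.2 (lt_of_le_of_lt h1 hyV)
end

section
/- Let X be a topological space and {F_n}_{n∈ω} a family of closed subsets such that each F_n has a functional neighborhood U_n with the family {U_n} compact-finite. Then the function f : X → ℝ defined by f = Σ_{n∈ω} n·g_n, where g_n : X → [0,1] is continuous with g_n(F_n) ⊆ {1} and g_n(X\U_n) ⊆ {0}, is well-defined and its restriction to every compact subset of X is continuous. -/
/-- The function Σ n·g_n built from functional neighborhoods of a compact-finite family is
well-defined and continuous on every compact subset. -/
theorem stmt13 {X : Type*} [TopologicalSpace X] (F U : ℕ → Set X) (g : ℕ → X → ℝ)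
    (hFcl : ∀ n, IsClosed (F n))
    (hg : ∀ n, Continuous (g n)) (hg01 : ∀ n y, g n y ∈ Set.Icc (0:ℝ) 1)
    (hgF : ∀ n, ∀ x ∈ F n, g n x = 1) (hgU : ∀ n, ∀ y ∉ U n, g n y = 0)
    (hcf : ∀ K : Set X, IsCompact K → {n | (K ∩ U n).Nonempty}.Finite) :
    (∀ x : X, Summable (fun n : ℕ => (n : ℝ) * g n x)) ∧
    ∀ K : Set X, IsCompact K →
      Continuous (fun x : K => ∑' n : ℕ, (n : ℝ) * g n (x : X)) := by
  constructor
  · intro x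
    have hS := hcf {x} isCompact_singleton
    refine summable_of_ne_finset_zero (s := hS.toFinset) ?_
    intro n hn
    have hx : x ∉ U n := by
      intro hxU
      exact hn (hS.mem_toFinset.mpr ⟨x, Set.mem_singleton x, hxU⟩)
    simp [hgU n x hx]
  · intro K hK
    have hS := hcf K hK
    have heq : (fun x : K => ∑' n : ℕ, (n : ℝ) * g n (x : X))
        = fun x : K => ∑ n ∈ hS.toFinset, (n : ℝ) * g n (x : X) := by
      funext x
      refine tsum_eq_sum ?_
      intro n hn
      have hx : (x : X) ∉ U n := by
        intro hxU
        exact hn (hS.mem_toFinset.mpr ⟨x, x.2, hxU⟩)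
      simp [hgU n x hx]
    rw [heq]
    exact continuous_finset_sum _ fun n _ =>
      (continuous_const.mul ((hg n).comp continuous_subtype_val))
end
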